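/- For all i, j ∈ {1,…,c}, the maps σ_i and σ_j anticommute: for every subset S ⊆ {1,…,r}, σ_i(σ_j(ε_S)) + σ_j(σ_i(ε_S)) = 0, i.e., σ_i ∘ σ_j + σ_j ∘ σ_i = 0 as maps T_k → T_{k+2}. -/

import Mathlib

open MvPolynomial

/-- The position `p_{t,S}` of `t` in `S ∪ {t}`: one plus the number of elements of `S`
smaller than `t`. -/
def taylorPos {r : ℕ} (S : Finset (Fin r)) (t : Fin r) : ℕ :=
  (S.filter fun s => s < t).card + 1

variable (𝕜 : Type*) [Field 𝕜] {n r : ℕ}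

/-- `m_S`: the lcm of the monomials `m_j = x^{v j}` for `j ∈ S` (equal to `1` when `S = ∅`). -/
noncomputable def taylorLcm (v : Fin r → (Fin n →₀ ℕ)) (S : Finset (Fin r)) :
    MvPolynomial (Fin n) 𝕜 :=
  monomial (S.sup v) 1

/-- The matrix entry of the Taylor differential: `(-1)^{k-i} m_S / m_{S∖{s}}`
(where `i = p_{s,S}` is the position of `s` in `S` and `k = |S|`). -/
noncomputable def taylorEntry (v : Fin r → (Fin n →₀ ℕ)) (S : Finset (Fin r)) (s : Fin r) :
    MvPolynomial (Fin n) 𝕜 :=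
  (-1) ^ (S.card - taylorPos S s) * monomial (S.sup v - (S.erase s).sup v) 1

/-- The matrix entry of the homotopy `σ`:
`(-1)^{k - p_{t,S} - 1} f_t m_t m_S / m_{S ∪ {t}}` (where `k = |S|`); the sign is written as
`(-1)^{k + p_{t,S} + 1}`, which agrees with `(-1)^{k - p_{t,S} - 1}` since the exponents have
the same parity. -/
noncomputable def htpyEntry (v : Fin r → (Fin n →₀ ℕ)) (f : Fin r → MvPolynomial (Fin n) 𝕜)
    (S : Finset (Fin r)) (t : Fin r) : MvPolynomial (Fin n) 𝕜 :=
  (-1) ^ (S.card + taylorPos S t + 1) *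
    (f t * monomial (v t + S.sup v - (insert t S).sup v) 1)

/-- The total module of the Taylor complex: the free `Q`-module with basis
`{ε_S : S ⊆ {1,…,r}}`; the basis element `ε_S` is `Finsupp.single S 1`. -/
abbrev TaylorModule (n r : ℕ) := Finset (Fin r) →₀ MvPolynomial (Fin n) 𝕜

/-- The Taylor differential `τ` on the total module,
`τ(ε_S) = Σ_{s ∈ S} (-1)^{|S| - p_{s,S}} (m_S / m_{S∖{s}}) ε_{S∖{s}}`. -/
noncomputable def taylorTau (v : Fin r → (Fin n →₀ ℕ)) :
    TaylorModule 𝕜 n r →ₗ[MvPolynomial (Fin n) 𝕜] TaylorModule 𝕜 n r :=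
  Finsupp.lsum (MvPolynomial (Fin n) 𝕜) fun S =>
    LinearMap.toSpanSingleton _ _
      (∑ s ∈ S, Finsupp.single (S.erase s) (taylorEntry 𝕜 v S s))

/-- The homotopy `σ` attached to a coefficient family `f` (with `a = Σ_j f_j m_j`):
`σ(ε_S) = Σ_{t ∉ S} (-1)^{|S| - p_{t,S} - 1} (f_t m_t m_S / m_{S∪{t}}) ε_{S∪{t}}`. -/
noncomputable def taylorHtpy (v : Fin r → (Fin n →₀ ℕ)) (f : Fin r → MvPolynomial (Fin n) 𝕜) :
    TaylorModule 𝕜 n r →ₗ[MvPolynomial (Fin n) 𝕜] TaylorModule 𝕜 n r :=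
  Finsupp.lsum (MvPolynomial (Fin n) 𝕜) fun S =>
    LinearMap.toSpanSingleton _ _
      (∑ t ∈ Sᶜ, Finsupp.single (insert t S) (htpyEntry 𝕜 v f S t))

/-!
In `σ_h (σ_g ε_S)` the basis vector `ε_{S ∪ {t,u}}` (`t ≠ u`, both outside `S`) receives
`± g_t h_u x^{v_t + v_u + deg m_S - deg m_{S ∪ {t,u}}}`: the lcm exponents telescope, so the
monomial is symmetric in `t` and `u`. Inserting `t` first and then `u`, or the other way round,
shifts exactly one of the two positions `p_{t,·}`, `p_{u,·}` by one, so the two signs are opposite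
and the `(t,u)` term of `σ_h σ_g` cancels the `(u,t)` term of `σ_g σ_h`.
-/
theorem add_sup_tsub_add_tsub_sup {α : Type*} [AddCommMonoid α] [SemilatticeSup α]
    [CanonicallyOrderedAdd α] [Sub α] [OrderedSub α] [AddLeftReflectLE α] (a b c : α) :
    (a + b ⊔ c - a ⊔ (b ⊔ c)) + (b + c - b ⊔ c) = a + b + c - a ⊔ (b ⊔ c) := by
  have h₁ : a ⊔ (b ⊔ c) ≤ a + b ⊔ c := sup_le le_self_add le_add_self
  have h₂ : b ⊔ c ≤ b + c := sup_le le_self_add le_add_self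
  rw [tsub_add_tsub_comm h₁ h₂, ← add_tsub_add_eq_tsub_right (a + b + c) (b ⊔ c)]
  congr 1
  abel

theorem neg_one_pow_mul_add_neg_one_pow_mul_eq_zero {R : Type*} [Ring R] {a b : ℕ}
    (h : Odd (a + b)) (x : R) : (-1) ^ a * x + (-1) ^ b * x = 0 := by
  rcases Nat.even_or_odd a with ha | ha
  · rw [ha.neg_one_pow, (Nat.odd_add'.mp h).mpr ha |>.neg_one_pow]
    noncomm_ring
  · rw [ha.neg_one_pow, (Nat.odd_add.mp h).mp ha |>.neg_one_pow]
    noncomm_ring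

theorem taylorPos_insert {S : Finset (Fin r)} {t : Fin r} (ht : t ∉ S) (u : Fin r) :
    taylorPos (insert t S) u = taylorPos S u + if t < u then 1 else 0 := by
  unfold taylorPos
  rw [Finset.filter_insert]
  split_ifs with htu
  · rw [Finset.card_insert_of_notMem fun h => ht (Finset.mem_filter.mp h).1]
  · rfl

section Htpy

variable {𝕜} (v : Fin r → (Fin n →₀ ℕ))

theorem htpyEntry_mul_htpyEntry_insert (g h : Fin r → MvPolynomial (Fin n) 𝕜)
    (S : Finset (Fin r)) (t u : Fin r) :
    htpyEntry 𝕜 v g S t * htpyEntry 𝕜 v h (insert t S) u =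
      (-1) ^ (S.card + taylorPos S t + (insert t S).card + taylorPos (insert t S) u) *
        (g t * h u * monomial (v u + v t + S.sup v - (insert u (insert t S)).sup v) 1) := by
  have hmon : monomial (v u + (insert t S).sup v - (insert u (insert t S)).sup v) (1 : 𝕜) *
      monomial (v t + S.sup v - (insert t S).sup v) 1 =
        monomial (v u + v t + S.sup v - (insert u (insert t S)).sup v) 1 := by
    simp only [monomial_mul, one_mul, Finset.sup_insert, add_sup_tsub_add_tsub_sup, add_assoc]
  rw [htpyEntry, htpyEntry, ← hmon]
  ring

theorem htpyEntry_mul_htpyEntry_insert_add_swap (g h : Fin r → MvPolynomial (Fin n) 𝕜)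
    {S : Finset (Fin r)} {t u : Fin r} (ht : t ∉ S) (hu : u ∉ S) (htu : t ≠ u) :
    htpyEntry 𝕜 v g S t * htpyEntry 𝕜 v h (insert t S) u +
      htpyEntry 𝕜 v h S u * htpyEntry 𝕜 v g (insert u S) t = 0 := by
  have hodd : Odd ((S.card + taylorPos S t + (insert t S).card + taylorPos (insert t S) u) +
      (S.card + taylorPos S u + (insert u S).card + taylorPos (insert u S) t)) := by
    rw [taylorPos_insert ht, taylorPos_insert hu, Finset.card_insert_of_notMem ht,
      Finset.card_insert_of_notMem hu, Nat.odd_iff]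
    rcases htu.lt_or_gt with hlt | hlt <;> simp only [hlt, hlt.not_gt, if_true, if_false] <;> omega
  rw [htpyEntry_mul_htpyEntry_insert, htpyEntry_mul_htpyEntry_insert, Finset.insert_comm t u,
    add_comm (v t) (v u), mul_comm (h u) (g t)]
  exact neg_one_pow_mul_add_neg_one_pow_mul_eq_zero hodd _

theorem taylorHtpy_single (g : Fin r → MvPolynomial (Fin n) 𝕜) (S : Finset (Fin r))
    (p : MvPolynomial (Fin n) 𝕜) :
    taylorHtpy 𝕜 v g (Finsupp.single S p) =
      ∑ t ∈ Sᶜ, Finsupp.single (insert t S) (p * htpyEntry 𝕜 v g S t) := by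
  simp only [taylorHtpy, Finsupp.lsum_single, LinearMap.toSpanSingleton_apply, Finset.smul_sum,
    Finsupp.smul_single, smul_eq_mul]

theorem taylorHtpy_taylorHtpy_single (g h : Fin r → MvPolynomial (Fin n) 𝕜)
    (S : Finset (Fin r)) :
    taylorHtpy 𝕜 v h (taylorHtpy 𝕜 v g (Finsupp.single S 1)) =
      ∑ t ∈ Sᶜ, ∑ u ∈ Sᶜ, if u ≠ t then
        Finsupp.single (insert u (insert t S))
          (htpyEntry 𝕜 v g S t * htpyEntry 𝕜 v h (insert t S) u) else 0 := by
  rw [taylorHtpy_single, map_sum]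
  refine Finset.sum_congr rfl fun t _ => ?_
  rw [one_mul, taylorHtpy_single, Finset.compl_insert, ← Finset.filter_ne',
    Finset.sum_filter]

theorem taylorHtpy_comp_add_comp_swap (g h : Fin r → MvPolynomial (Fin n) 𝕜) :
    taylorHtpy 𝕜 v g ∘ₗ taylorHtpy 𝕜 v h + taylorHtpy 𝕜 v h ∘ₗ taylorHtpy 𝕜 v g = 0 := by
  ext S : 2
  simp only [LinearMap.add_apply, LinearMap.comp_apply, Finsupp.lsingle_apply,
    LinearMap.zero_apply, taylorHtpy_taylorHtpy_single]
  rw [Finset.sum_comm (s := Sᶜ), ← Finset.sum_add_distrib]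
  refine Finset.sum_eq_zero fun t ht => ?_
  rw [← Finset.sum_add_distrib]
  refine Finset.sum_eq_zero fun u hu => ?_
  by_cases hut : u = t
  · simp [hut]
  · rw [if_pos hut, if_pos (Ne.symm hut), Finset.insert_comm t u, ← Finsupp.single_add,
      htpyEntry_mul_htpyEntry_insert_add_swap v h g (Finset.mem_compl.mp hu)
        (Finset.mem_compl.mp ht) hut, Finsupp.single_zero]

end Htpy

theorem taylor_htpy_anticommute_general {𝕜 : Type*} [Field 𝕜] {n r c : ℕ}
    (v : Fin r → (Fin n →₀ ℕ))
    (f : Fin c → Fin r → MvPolynomial (Fin n) 𝕜) :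
    ∀ i j : Fin c,
      (∀ S : Finset (Fin r),
        taylorHtpy 𝕜 v (f i) (taylorHtpy 𝕜 v (f j) (Finsupp.single S 1)) +
          taylorHtpy 𝕜 v (f j) (taylorHtpy 𝕜 v (f i) (Finsupp.single S 1)) = 0) ∧
      taylorHtpy 𝕜 v (f i) ∘ₗ taylorHtpy 𝕜 v (f j) +
        taylorHtpy 𝕜 v (f j) ∘ₗ taylorHtpy 𝕜 v (f i) = 0 := fun i j =>
  have h := taylorHtpy_comp_add_comp_swap v (f i) (f j)
  ⟨fun S => by simpa using LinearMap.congr_fun h (Finsupp.single S 1), h⟩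

/-- For all `i, j ∈ {1,…,c}`, the homotopies `σ_i` and `σ_j` anticommute:
for every subset `S ⊆ {1,…,r}`, `σ_i(σ_j(ε_S)) + σ_j(σ_i(ε_S)) = 0`, i.e.
`σ_i ∘ σ_j + σ_j ∘ σ_i = 0` as maps `T_k → T_{k+2}`.
Here `m_j = x^{v j}` and `a_i = Σ_j f_{i,j} m_j`. -/
theorem taylor_htpy_anticommute {𝕜 : Type*} [Field 𝕜] {n r c : ℕ}
    (v : Fin r → (Fin n →₀ ℕ)) (a : Fin c → MvPolynomial (Fin n) 𝕜)
    (f : Fin c → Fin r → MvPolynomial (Fin n) 𝕜)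
    (ha : ∀ i, a i = ∑ j : Fin r, f i j * monomial (v j) 1) :
    ∀ i j : Fin c,
      (∀ S : Finset (Fin r),
        taylorHtpy 𝕜 v (f i) (taylorHtpy 𝕜 v (f j) (Finsupp.single S 1)) +
          taylorHtpy 𝕜 v (f j) (taylorHtpy 𝕜 v (f i) (Finsupp.single S 1)) = 0) ∧
      taylorHtpy 𝕜 v (f i) ∘ₗ taylorHtpy 𝕜 v (f j) +
        taylorHtpy 𝕜 v (f j) ∘ₗ taylorHtpy 𝕜 v (f i) = 0 :=
  taylor_htpy_anticommute_general v f
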